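/- Let γ ∈ (ℕ ∪ {−1})^N with γ ∉ C_g, so that ‖γ‖_g ≠ 0 (and ‖γ‖_g is invertible in k since char k = 0). Define h_m : K_{g,γ}^m → K_{g,γ}^{m−1} by h_m(x^α ⊗ (x*)^{∧β}) = ‖γ‖_g^{−1} Σ_{i=1}^N ω_g(α,β,i) · x^{α−[i]} ⊗ (x*)^{∧(β−[i])}, where summands with α_i = 0 or β_i = 0 vanish because then ω_g(α,β,i) = 0. Then for all α ∈ ℕ^N and β ∈ {0,1}^N with |β| = m and α − β = γ: h_{m+1}(d*_{m+1}(x^α ⊗ (x*)^{∧β})) + d*_m(h_m(x^α ⊗ (x*)^{∧β})) = x^α ⊗ (x*)^{∧β}; that is, the identity map of K_{g,γ}^• is nullhomotopic. -/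

import Mathlib

attribute [local instance] Classical.propDecidable

noncomputable section

section Scalars
variable (k : Type) [Field k] (N : ℕ) (q : Fin N → Fin N → k) (lam : Fin N → k)

/-- `ε(β,i) = (-1)^{β_1 + ⋯ + β_i}`. -/
def eps (β : Fin N → ℤ) (i : Fin N) : k :=
  (-1 : k) ^ (∑ s ∈ Finset.univ.filter (fun s => s ≤ i), β s)

/-- The scalar `Ω_g(α, β, i)` of the paper: `0` if `∏_{s=1}^N q_{i,s}^{α_s-β_s} = λ_i`,
`0` if `β_i ≠ 0`, and
`ε(β,i) (∏_{s=1}^i q_{i,s}^{α_s-β_s} - λ_i ∏_{s=i}^N q_{s,i}^{α_s-β_s})` otherwise. -/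
def Omega (α β : Fin N → ℤ) (i : Fin N) : k :=
  if (∏ s, q i s ^ (α s - β s)) = lam i then 0
  else if β i ≠ 0 then 0
  else
    eps k N β i *
      ((∏ s ∈ Finset.univ.filter (fun s => s ≤ i), q i s ^ (α s - β s))
        - lam i * (∏ s ∈ Finset.univ.filter (fun s => i ≤ s), q s i ^ (α s - β s)))

/-- The scalar `ω_g(α, β, i)` of the paper: `0` if `∏_{s=1}^N q_{i,s}^{α_s-β_s} = λ_i`,
or `α_i ≤ 0`, or `β_i ≠ 1`; and `Ω_g(α-[i], β-[i], i)⁻¹` otherwise. -/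
def omg (α β : Fin N → ℤ) (i : Fin N) : k :=
  if (∏ s, q i s ^ (α s - β s)) = lam i then 0
  else if α i ≤ 0 then 0
  else if β i ≠ 1 then 0
  else (Omega k N q lam (α - Pi.single i 1) (β - Pi.single i 1) i)⁻¹

/-- `‖γ‖_g`, the number of indices `i` with `∏_{s=1}^N q_{i,s}^{γ_s} ≠ λ_i` and
`γ_i ≠ -1`. -/
def normg (γ : Fin N → ℤ) : ℕ :=
  (Finset.univ.filter (fun i : Fin N => (∏ s, q i s ^ γ s) ≠ lam i ∧ γ i ≠ -1)).card

end Scalars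


section Homotopy
variable (k : Type) [Field k] (N : ℕ) (q : Fin N → Fin N → k) (lam : Fin N → k)

/-- The twisted complex `K^• = A ⊗ ∧^•(V^*)`, written in its `k`-basis
`x^α ⊗ (x*)^{∧β}` indexed by pairs `(α, β) ∈ ℕ^N × {0,1}^N` (with `β` a subset of
`{1,…,N}`): an element is a finitely supported `k`-valued family of coefficients. -/
abbrev CoordCochain := ((Fin N → ℕ) × Finset (Fin N)) →₀ k

/-- A subset `β ⊆ {1,…,N}`, considered as a `{0,1}`-vector in `ℤ^N`. -/
def betaZ (S : Finset (Fin N)) : Fin N → ℤ := fun s => if s ∈ S then 1 else 0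

/-- The differential of the twisted complex, in coordinates (formula (9) of the paper):
`d*(x^α ⊗ (x*)^{∧β}) = Σ_{i=1}^N Ω_g(α,β,i) x^{α+[i]} ⊗ (x*)^{∧(β+[i])}`. -/
def Dtw : CoordCochain k N →ₗ[k] CoordCochain k N :=
  Finsupp.lsum k fun p : (Fin N → ℕ) × Finset (Fin N) =>
    LinearMap.toSpanSingleton k (CoordCochain k N)
      (∑ i : Fin N,
        Omega k N q lam (fun s => (p.1 s : ℤ)) (betaZ N p.2) i •
          Finsupp.single (p.1 + Pi.single i 1, insert i p.2) (1 : k))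

/-- The contracting homotopy `h` of Lemma 4.5 of the paper (for a fixed
`γ ∈ (ℕ ∪ {-1})^N` with `γ ∉ C_g`):
`h(x^α ⊗ (x*)^{∧β}) = ‖γ‖_g⁻¹ Σ_{i=1}^N ω_g(α,β,i) x^{α-[i]} ⊗ (x*)^{∧(β-[i])}`. -/
def Htw (γ : Fin N → ℤ) : CoordCochain k N →ₗ[k] CoordCochain k N :=
  Finsupp.lsum k fun p : (Fin N → ℕ) × Finset (Fin N) =>
    LinearMap.toSpanSingleton k (CoordCochain k N)
      (((normg k N q lam γ : k))⁻¹ •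
        ∑ i : Fin N,
          omg k N q lam (fun s => (p.1 s : ℤ)) (betaZ N p.2) i •
            Finsupp.single (p.1 - Pi.single i 1, p.2.erase i) (1 : k))

/-- The set `C_g = {γ ∈ (ℕ ∪ {-1})^N : for each i, ∏_s q_{i,s}^{γ_s} = λ_i or γ_i = -1}`. -/
def Cg : Set (Fin N → ℤ) :=
  {γ | ∀ i : Fin N, (∏ s, q i s ^ γ s) = lam i ∨ γ i = -1}

end Homotopy

/-!
Fix a basis vector `e = x^α ⊗ (x*)^{∧β}` of `K_{g,γ}`. Because `α - β = γ` is fixed,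
`Ω_g(α,β,i)` is the sign `ε(β,i)` times a scalar `B_i(γ)` depending on `γ` alone, and `B_i(γ)`
vanishes exactly when `∏_s q_{i,s}^{γ_s} = λ_i`. Expanding `hd + dh` on `e` gives a sum over
pairs `(i, j)`: for `i ≠ j`, adding `x_i` then removing `x_j` and removing `x_j` then adding
`x_i` reach the same basis vector with coefficients `± B_i / B_j` of opposite signs, so they
cancel; for `i = j`, exactly one of the two paths returns to `e`, with coefficient `1` if
`B_i(γ) ≠ 0` and `γ_i ≠ -1`, and `0` otherwise. The sum is therefore `‖γ‖_g e`.
-/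

section Signs

variable {k : Type} [Field k] {N : ℕ}

lemma eps_add_single (β : Fin N → ℤ) (i j : Fin N) :
    eps k N (β + Pi.single j 1) i = (if j ≤ i then -1 else 1) * eps k N β i := by
  unfold eps
  simp only [Pi.add_apply, Finset.sum_add_distrib, Finset.sum_pi_single', Finset.mem_filter,
    Finset.mem_univ, true_and]
  rw [zpow_add₀ (by norm_num), mul_comm]
  split_ifs <;> simp

lemma eps_sub_single (β : Fin N → ℤ) (i j : Fin N) :
    eps k N (β - Pi.single j 1) i = (if j ≤ i then -1 else 1) * eps k N β i := by
  conv_rhs => rw [← sub_add_cancel β (Pi.single j 1), eps_add_single, ← mul_assoc]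
  split_ifs <;> simp

lemma eps_ne_zero (β : Fin N → ℤ) (i : Fin N) : eps k N β i ≠ 0 :=
  zpow_ne_zero _ (by norm_num)

end Signs

section UnsignedOmega

variable {k : Type} [Field k] {N : ℕ} (q : Fin N → Fin N → k) (lam : Fin N → k)

def unsignedOmega (γ : Fin N → ℤ) (i : Fin N) : k :=
  (∏ s ∈ Finset.univ.filter (fun s => s ≤ i), q i s ^ γ s)
    - lam i * (∏ s ∈ Finset.univ.filter (fun s => i ≤ s), q s i ^ γ s)

variable {q}

lemma unsignedOmega_mul_prod (hq1 : ∀ i, q i i = 1) (hqinv : ∀ i j, q j i = (q i j)⁻¹)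
    (γ : Fin N → ℤ) (i : Fin N) (hq : ∏ s ∈ Finset.univ.filter (fun s => i ≤ s), q i s ^ γ s ≠ 0) :
    unsignedOmega q lam γ i * ∏ s ∈ Finset.univ.filter (fun s => i ≤ s), q i s ^ γ s
      = (∏ s, q i s ^ γ s) - lam i := by
  have hsplit : (∏ s ∈ Finset.univ.filter (fun s => s ≤ i), q i s ^ γ s)
      * ∏ s ∈ Finset.univ.filter (fun s => i ≤ s), q i s ^ γ s = ∏ s, q i s ^ γ s := by
    have hunion : Finset.univ.filter (fun s => s ≤ i) ∪ Finset.univ.filter (fun s => i ≤ s)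
        = Finset.univ := by
      ext s; simpa using le_total s i
    have hinter : Finset.univ.filter (fun s => s ≤ i) ∩ Finset.univ.filter (fun s => i ≤ s)
        = {i} := by
      ext s; simpa using le_antisymm_iff.symm
    rw [← Finset.prod_union_inter, hunion, hinter, Finset.prod_singleton, hq1, one_zpow, mul_one]
  have hinv : ∏ s ∈ Finset.univ.filter (fun s => i ≤ s), q s i ^ γ s
      = (∏ s ∈ Finset.univ.filter (fun s => i ≤ s), q i s ^ γ s)⁻¹ := by
    rw [← Finset.prod_inv_distrib]
    exact Finset.prod_congr rfl fun s _ => by rw [hqinv i s, inv_zpow]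
  rw [unsignedOmega, sub_mul, hsplit, hinv, mul_assoc, inv_mul_cancel₀ hq, mul_one]

lemma unsignedOmega_eq_zero_iff (hq0 : ∀ i j, q i j ≠ 0) (hq1 : ∀ i, q i i = 1)
    (hqinv : ∀ i j, q j i = (q i j)⁻¹) (γ : Fin N → ℤ) (i : Fin N) :
    unsignedOmega q lam γ i = 0 ↔ (∏ s, q i s ^ γ s) = lam i := by
  have hq : ∏ s ∈ Finset.univ.filter (fun s => i ≤ s), q i s ^ γ s ≠ 0 :=
    Finset.prod_ne_zero_iff.2 fun s _ => zpow_ne_zero _ (hq0 i s)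
  rw [← sub_eq_zero (a := ∏ s, _), ← unsignedOmega_mul_prod lam hq1 hqinv γ i hq,
    mul_eq_zero, or_iff_left hq]

variable {lam}

lemma Omega_of_ne_zero {α β : Fin N → ℤ} {i : Fin N} (hβ : β i ≠ 0) :
    Omega k N q lam α β i = 0 := by
  simp [Omega, hβ]

lemma omg_of_nonpos {α β : Fin N → ℤ} {i : Fin N} (hα : α i ≤ 0) : omg k N q lam α β i = 0 := by
  simp [omg, hα]

lemma omg_of_ne_one {α β : Fin N → ℤ} {i : Fin N} (hβ : β i ≠ 1) : omg k N q lam α β i = 0 := by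
  simp [omg, hβ]

variable {γ : Fin N → ℤ}

lemma Omega_of_eq_zero (hB : ∀ i, unsignedOmega q lam γ i = 0 ↔ (∏ s, q i s ^ γ s) = lam i)
    {α β : Fin N → ℤ} (hd : α - β = γ) {i : Fin N} (hβ : β i = 0) :
    Omega k N q lam α β i = eps k N β i * unsignedOmega q lam γ i := by
  simp only [Omega, ← Pi.sub_apply α β, hd, hβ, ne_eq, not_true_eq_false, if_false]
  split_ifs with hP
  · rw [(hB i).2 hP, mul_zero]
  · rfl

lemma omg_of_pos (hB : ∀ i, unsignedOmega q lam γ i = 0 ↔ (∏ s, q i s ^ γ s) = lam i)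
    {α β : Fin N → ℤ} (hd : α - β = γ) {i : Fin N} (hα : 0 < α i) (hβ : β i = 1) :
    omg k N q lam α β i = (eps k N (β - Pi.single i 1) i * unsignedOmega q lam γ i)⁻¹ := by
  simp only [omg, ← Pi.sub_apply α β, hd, hβ, not_le.2 hα, ne_eq, not_true_eq_false, if_false]
  rw [Omega_of_eq_zero hB (by rw [sub_sub_sub_cancel_right, hd]) (by simp [hβ])]
  split_ifs with hP
  · rw [(hB i).2 hP, mul_zero, inv_zero]
  · rfl

lemma eps_mul_unsignedOmega_inv_mul_self
    (hB : ∀ i, unsignedOmega q lam γ i = 0 ↔ (∏ s, q i s ^ γ s) = lam i)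
    (β : Fin N → ℤ) (i : Fin N) :
    (eps k N β i * unsignedOmega q lam γ i)⁻¹ * (eps k N β i * unsignedOmega q lam γ i)
      = if (∏ s, q i s ^ γ s) = lam i then 0 else 1 := by
  split_ifs with hP
  · rw [(hB i).2 hP, mul_zero, inv_zero, zero_mul]
  · exact inv_mul_cancel₀ (mul_ne_zero (eps_ne_zero β i) ((hB i).not.2 hP))

end UnsignedOmega

section Basis

variable {N : ℕ}

lemma betaZ_insert {S : Finset (Fin N)} {i : Fin N} (h : i ∉ S) :
    betaZ N (insert i S) = betaZ N S + Pi.single i 1 := by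
  funext s
  rcases eq_or_ne s i with rfl | hs <;> simp [betaZ, *]

lemma betaZ_erase {S : Finset (Fin N)} {i : Fin N} (h : i ∈ S) :
    betaZ N (S.erase i) = betaZ N S - Pi.single i 1 := by
  funext s
  rcases eq_or_ne s i with rfl | hs <;> simp [betaZ, *]

lemma natCast_add_single (α : Fin N → ℕ) (i : Fin N) :
    (fun s => ((α + Pi.single i 1 : Fin N → ℕ) s : ℤ)) = (fun s => (α s : ℤ)) + Pi.single i 1 := by
  funext s
  rcases eq_or_ne s i with rfl | hs <;> simp [*]

lemma natCast_sub_single {α : Fin N → ℕ} {i : Fin N} (h : 0 < α i) :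
    (fun s => ((α - Pi.single i 1 : Fin N → ℕ) s : ℤ)) = (fun s => (α s : ℤ)) - Pi.single i 1 := by
  funext s
  rcases eq_or_ne s i with rfl | hs <;> simp [*]

end Basis

section Homotopy

variable {k : Type} [Field k] {N : ℕ} (q : Fin N → Fin N → k) (lam : Fin N → k)

lemma Dtw_single (p : (Fin N → ℕ) × Finset (Fin N)) :
    Dtw k N q lam (Finsupp.single p 1) =
      ∑ i : Fin N, Omega k N q lam (fun s => (p.1 s : ℤ)) (betaZ N p.2) i •
        Finsupp.single (p.1 + Pi.single i 1, insert i p.2) 1 := by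
  simp [Dtw]

lemma Htw_single (γ : Fin N → ℤ) (p : (Fin N → ℕ) × Finset (Fin N)) :
    Htw k N q lam γ (Finsupp.single p 1) =
      (normg k N q lam γ : k)⁻¹ • ∑ i : Fin N,
        omg k N q lam (fun s => (p.1 s : ℤ)) (betaZ N p.2) i •
          Finsupp.single (p.1 - Pi.single i 1, p.2.erase i) 1 := by
  simp [Htw]

def homotopyTerm (α : Fin N → ℕ) (S : Finset (Fin N)) (i j : Fin N) : CoordCochain k N :=
  (Omega k N q lam (fun s => (α s : ℤ)) (betaZ N S) i *
      omg k N q lam (fun s => ((α + Pi.single i 1 : Fin N → ℕ) s : ℤ)) (betaZ N (insert i S)) j) •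
    Finsupp.single (α + Pi.single i 1 - Pi.single j 1, (insert i S).erase j) 1 +
  (omg k N q lam (fun s => (α s : ℤ)) (betaZ N S) j *
      Omega k N q lam (fun s => ((α - Pi.single j 1 : Fin N → ℕ) s : ℤ)) (betaZ N (S.erase j)) i) •
    Finsupp.single (α - Pi.single j 1 + Pi.single i 1, insert i (S.erase j)) 1

lemma Htw_Dtw_add_Dtw_Htw_single (γ : Fin N → ℤ) (α : Fin N → ℕ) (S : Finset (Fin N)) :
    Htw k N q lam γ (Dtw k N q lam (Finsupp.single (α, S) 1))
        + Dtw k N q lam (Htw k N q lam γ (Finsupp.single (α, S) 1))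
      = (normg k N q lam γ : k)⁻¹ • ∑ i, ∑ j, homotopyTerm q lam α S i j := by
  simp only [Dtw_single, Htw_single, map_sum, map_smul, Finset.smul_sum, smul_smul,
    homotopyTerm, smul_add, Finset.sum_add_distrib]
  congr 1
  · exact Finset.sum_congr rfl fun i _ => Finset.sum_congr rfl fun j _ => by rw [mul_left_comm]
  · rw [Finset.sum_comm]
    exact Finset.sum_congr rfl fun i _ => Finset.sum_congr rfl fun j _ => by rw [mul_assoc]

variable {q lam} {γ : Fin N → ℤ}

lemma omg_basis_eq_zero {α : Fin N → ℕ} {S : Finset (Fin N)} {j : Fin N} (h : j ∉ S ∨ α j = 0) :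
    omg k N q lam (fun s => (α s : ℤ)) (betaZ N S) j = 0 := by
  rcases h with h | h
  · exact omg_of_ne_one (by simp [betaZ, h])
  · exact omg_of_nonpos (by simp [h])

lemma homotopyTerm_of_ne (hB : ∀ i, unsignedOmega q lam γ i = 0 ↔ (∏ s, q i s ^ γ s) = lam i)
    {α : Fin N → ℕ} {S : Finset (Fin N)} (hd : (fun s => (α s : ℤ)) - betaZ N S = γ)
    {i j : Fin N} (hij : i ≠ j) : homotopyTerm q lam α S i j = 0 := by
  have hα : α + Pi.single i 1 - Pi.single j 1 = α - Pi.single j 1 + Pi.single i 1 := by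
    funext s; simp only [Pi.add_apply, Pi.sub_apply, Pi.single_apply]; split_ifs <;> omega
  rw [homotopyTerm, hα, Finset.erase_insert_of_ne hij, ← add_smul]
  refine smul_eq_zero_of_left ?_ _
  by_cases hi : i ∈ S
  · rw [Omega_of_ne_zero (by simp [betaZ, hi]), Omega_of_ne_zero (by simp [betaZ, hi, hij]),
      zero_mul, mul_zero, add_zero]
  by_cases hj : j ∈ S ∧ 0 < α j
  · obtain ⟨hjS, hαj⟩ := hj
    rw [Omega_of_eq_zero hB hd (by simp [betaZ, hi]),
      omg_of_pos hB (by rw [natCast_add_single, betaZ_insert hi, add_sub_add_right_eq_sub, hd])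
        (by simp [hij.symm, hαj]) (by simp [betaZ, hjS]),
      omg_of_pos hB hd (by simpa using hαj) (by simp [betaZ, hjS]),
      Omega_of_eq_zero hB
        (by rw [natCast_sub_single hαj, betaZ_erase hjS, sub_sub_sub_cancel_right, hd])
        (by simp [betaZ, hi]),
      betaZ_insert hi, betaZ_erase hjS]
    simp only [eps_sub_single, eps_add_single, le_refl, if_true]
    rcases hij.lt_or_gt with h | h <;> simp only [h.le, h.not_ge, if_true, if_false] <;> ring
  · rw [not_and_or, Nat.not_lt, Nat.le_zero] at hj
    rw [omg_basis_eq_zero (by simpa [hij.symm] using hj), omg_basis_eq_zero hj, mul_zero, zero_mul,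
      add_zero]

lemma homotopyTerm_self (hB : ∀ i, unsignedOmega q lam γ i = 0 ↔ (∏ s, q i s ^ γ s) = lam i)
    {α : Fin N → ℕ} {S : Finset (Fin N)} (hd : (fun s => (α s : ℤ)) - betaZ N S = γ) (i : Fin N) :
    homotopyTerm q lam α S i i
      = (if (∏ s, q i s ^ γ s) ≠ lam i ∧ γ i ≠ -1 then (1 : k) else 0) •
          Finsupp.single (α, S) 1 := by
  have hγi : (α i : ℤ) - betaZ N S i = γ i := congrFun hd i
  rw [homotopyTerm]
  by_cases hi : i ∈ S
  · simp only [betaZ, hi, if_true] at hγi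
    rw [Omega_of_ne_zero (by simp [betaZ, hi]), zero_mul, zero_smul, zero_add]
    rcases Nat.eq_zero_or_pos (α i) with hα | hα
    · rw [omg_of_nonpos (by simp [hα]), zero_mul, zero_smul, if_neg fun h => h.2 (by omega),
        zero_smul]
    have hαi : α - Pi.single i 1 + Pi.single i 1 = α := by
      funext s
      rcases eq_or_ne s i with rfl | hs
      · simpa using Nat.sub_add_cancel hα
      · simp [hs]
    rw [omg_of_pos hB hd (by simpa using hα) (by simp [betaZ, hi]),
      Omega_of_eq_zero hB
        (by rw [natCast_sub_single hα, betaZ_erase hi, sub_sub_sub_cancel_right, hd])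
        (by simp [betaZ]),
      betaZ_erase hi, eps_mul_unsignedOmega_inv_mul_self hB, hαi, Finset.insert_erase hi]
    congr 1
    split_ifs <;> simp_all
  · simp only [betaZ, hi, if_false] at hγi
    rw [omg_basis_eq_zero (α := α) (S := S) (Or.inl hi), zero_mul, zero_smul, add_zero,
      Omega_of_eq_zero hB hd (by simp [betaZ, hi]),
      omg_of_pos hB (by rw [natCast_add_single, betaZ_insert hi, add_sub_add_right_eq_sub, hd])
        (by simp) (by simp [betaZ]),
      betaZ_insert hi, add_sub_cancel_right, mul_comm, eps_mul_unsignedOmega_inv_mul_self hB,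
      add_tsub_cancel_right, Finset.erase_insert hi]
    congr 1
    split_ifs <;> simp_all

lemma sum_homotopyTerm (hB : ∀ i, unsignedOmega q lam γ i = 0 ↔ (∏ s, q i s ^ γ s) = lam i)
    {α : Fin N → ℕ} {S : Finset (Fin N)} (hd : (fun s => (α s : ℤ)) - betaZ N S = γ) :
    ∑ i, ∑ j, homotopyTerm q lam α S i j = (normg k N q lam γ : k) • Finsupp.single (α, S) 1 := by
  rw [Finset.sum_congr rfl fun i _ => Finset.sum_eq_single_of_mem i (Finset.mem_univ i)
    fun j _ hji => homotopyTerm_of_ne hB hd (Ne.symm hji)]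
  simp only [homotopyTerm_self hB hd, ← Finset.sum_smul, Finset.sum_boole]
  rfl

end Homotopy

lemma normg_ne_zero {k : Type} [Field k] {N : ℕ} {q : Fin N → Fin N → k} {lam : Fin N → k}
    {γ : Fin N → ℤ} (h : γ ∉ Cg k N q lam) : normg k N q lam γ ≠ 0 := by
  obtain ⟨i, hi⟩ : ∃ i, (∏ s, q i s ^ γ s) ≠ lam i ∧ γ i ≠ -1 := by
    simpa [Cg, not_forall, not_or] using h
  exact Finset.card_ne_zero_of_mem (Finset.mem_filter.2 ⟨Finset.mem_univ i, hi⟩)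

theorem stmt11_general (k : Type) [Field k] [CharZero k] (N : ℕ)
    (q : Fin N → Fin N → k) (hq0 : ∀ i j, q i j ≠ 0) (hq1 : ∀ i, q i i = 1)
    (hqinv : ∀ i j, q j i = (q i j)⁻¹)
    (lam : Fin N → k)
    (γ : Fin N → ℤ) (hγC : γ ∉ Cg k N q lam) :
    normg k N q lam γ ≠ 0 ∧
    ((normg k N q lam γ : k) ≠ 0) ∧
    ∀ (m : ℕ) (α : Fin N → ℕ) (S : Finset (Fin N)), S.card = m →
      (fun s => (α s : ℤ)) - betaZ N S = γ →
      Htw k N q lam γ (Dtw k N q lam (Finsupp.single (α, S) (1 : k)))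
        + Dtw k N q lam (Htw k N q lam γ (Finsupp.single (α, S) (1 : k)))
        = Finsupp.single (α, S) (1 : k) := by
  have hnorm : (normg k N q lam γ : k) ≠ 0 := Nat.cast_ne_zero.2 (normg_ne_zero hγC)
  refine ⟨normg_ne_zero hγC, hnorm, fun m α S _ hd => ?_⟩
  have hB := unsignedOmega_eq_zero_iff lam hq0 hq1 hqinv γ
  rw [Htw_Dtw_add_Dtw_Htw_single, sum_homotopyTerm hB hd, smul_smul, inv_mul_cancel₀ hnorm,
    one_smul]

/-- Lemma 4.5 of the paper: for `γ ∈ (ℕ ∪ {-1})^N` with `γ ∉ C_g` one has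
`‖γ‖_g ≠ 0` (and `‖γ‖_g` is invertible in `k` since `char k = 0`), and the maps
`h_m(x^α ⊗ (x*)^{∧β}) = ‖γ‖_g⁻¹ Σ_i ω_g(α,β,i) x^{α-[i]} ⊗ (x*)^{∧(β-[i])}` satisfy
`h_{m+1}(d*(x^α ⊗ (x*)^{∧β})) + d*(h_m(x^α ⊗ (x*)^{∧β})) = x^α ⊗ (x*)^{∧β}` for all
`α ∈ ℕ^N`, `β ∈ {0,1}^N` with `|β| = m` and `α - β = γ`; that is, the identity map of
`K_{g,γ}^•` is nullhomotopic. -/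
theorem stmt11 (k : Type) [Field k] [CharZero k] (N : ℕ) (hN : 0 < N)
    (q : Fin N → Fin N → k) (hq0 : ∀ i j, q i j ≠ 0) (hq1 : ∀ i, q i i = 1)
    (hqinv : ∀ i j, q j i = (q i j)⁻¹)
    (lam : Fin N → k) (hlam : ∀ i, lam i ≠ 0)
    (γ : Fin N → ℤ) (hγ : ∀ i, -1 ≤ γ i) (hγC : γ ∉ Cg k N q lam) :
    normg k N q lam γ ≠ 0 ∧
    ((normg k N q lam γ : k) ≠ 0) ∧
    ∀ (m : ℕ) (α : Fin N → ℕ) (S : Finset (Fin N)), S.card = m →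
      (fun s => (α s : ℤ)) - betaZ N S = γ →
      Htw k N q lam γ (Dtw k N q lam (Finsupp.single (α, S) (1 : k)))
        + Dtw k N q lam (Htw k N q lam γ (Finsupp.single (α, S) (1 : k)))
        = Finsupp.single (α, S) (1 : k) :=
  stmt11_general k N q hq0 hq1 hqinv lam γ hγC
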